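/- Let T be a positive trace-preserving linear map on M_n, A = I − T, and A^# the group inverse of A (which exists). Then for every state ρ, the matrix (I − A^#A)(ρ) is an invariant state of T: it is positive semidefinite, has trace 1, and T((I − A^#A)(ρ)) = (I − A^#A)(ρ). -/

import Mathlib

open Matrix
open scoped ComplexOrder

noncomputable section

/-- The algebra of `n × n` complex matrices. -/
abbrev Mn (n : ℕ) : Type := Matrix (Fin n) (Fin n) ℂ

/-- The map `X ↦ Q X Q`. -/
def sandwich {n : ℕ} (Q : Mn n) : Module.End ℂ (Mn n) :=
  (LinearMap.mulLeft ℂ Q).comp (LinearMap.mulRight ℂ Q)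

/-- The sum of the two components of a pair. -/
def sumPair (n : ℕ) : (Mn n × Mn n) →ₗ[ℂ] Mn n :=
  LinearMap.fst ℂ (Mn n) (Mn n) + LinearMap.snd ℂ (Mn n) (Mn n)

/-- The QMC `Λ_{T,V}` induced by the channel `T` and the subspace `V` (with orthogonal
projection `P` onto `V` and `Q = I − P`):
`Λ(X₁,X₂) = ((I−ℚ)(T(X₁+X₂)), ℚ(T(X₁+X₂)))` where `ℚ(Y) = QYQ`. -/
def Lam {n : ℕ} (T : Module.End ℂ (Mn n)) (Q : Mn n) : Module.End ℂ (Mn n × Mn n) :=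
  LinearMap.prod
    (((1 : Module.End ℂ (Mn n)) - sandwich Q) ∘ₗ (T ∘ₗ sumPair n))
    ((sandwich Q) ∘ₗ (T ∘ₗ sumPair n))

/-- `ℙ₁(X₁,X₂) = (X₁,0)`. -/
def proj1 (n : ℕ) : Module.End ℂ (Mn n × Mn n) :=
  (LinearMap.inl ℂ (Mn n) (Mn n)).comp (LinearMap.fst ℂ (Mn n) (Mn n))

/-- `ℙ₂(X₁,X₂) = (0,X₂)`. -/
def proj2 (n : ℕ) : Module.End ℂ (Mn n × Mn n) :=
  (LinearMap.inr ℂ (Mn n) (Mn n)).comp (LinearMap.snd ℂ (Mn n) (Mn n))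

/-- The block-diagonal part `S_d = diag(S₁₁,S₂₂)` of a map on `M_n ⊕ M_n`. -/
def diagPart {n : ℕ} (S : Module.End ℂ (Mn n × Mn n)) : Module.End ℂ (Mn n × Mn n) :=
  proj1 n * S * proj1 n + proj2 n * S * proj2 n

/-- The map `E(X₁,X₂) = (X₁+X₂, X₁+X₂)`. -/
def Emap (n : ℕ) : Module.End ℂ (Mn n × Mn n) :=
  LinearMap.prod (sumPair n) (sumPair n)

/-- The map `Θ_W(X₁,X₂) = Tr(X₁+X₂)·W`. -/
def Theta {n : ℕ} (W : Mn n × Mn n) : Module.End ℂ (Mn n × Mn n) :=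
  ((Matrix.traceLinearMap (Fin n) ℂ ℂ) ∘ₗ sumPair n).smulRight W

/-- The mean hitting time `τ(ρ → V) = Σ_{r ≥ 1} r·Tr(ℙT(ℚT)^{r−1} ρ)`. -/
def tau {n : ℕ} (T : Module.End ℂ (Mn n)) (P Q : Mn n) (ρ : Mn n) : ℂ :=
  ∑' r : ℕ, ((r : ℂ) + 1) * ((sandwich P * T * (sandwich Q * T) ^ r) ρ).trace

/-- The pure state `ρ_φ = |φ⟩⟨φ|`. -/
def rhoOf {n : ℕ} (φ : Fin n → ℂ) : Mn n := Matrix.vecMulVec φ (star φ)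

/-- A positive map on `M_n`. -/
def IsPosMap {n : ℕ} (T : Module.End ℂ (Mn n)) : Prop :=
  ∀ X : Mn n, X.PosSemidef → (T X).PosSemidef

/-- A trace-preserving map on `M_n`. -/
def IsTracePreserving {n : ℕ} (T : Module.End ℂ (Mn n)) : Prop :=
  ∀ X : Mn n, (T X).trace = X.trace

/-- A quantum channel: a completely positive trace-preserving map, given by a Kraus
decomposition `T(X) = Σᵢ Vᵢ X Vᵢ*` with `Σᵢ Vᵢ* Vᵢ = I`. -/
def IsChannel {n : ℕ} (T : Module.End ℂ (Mn n)) : Prop :=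
  ∃ (k : ℕ) (V : Fin k → Mn n),
    (∀ X : Mn n, T X = ∑ i, V i * X * (V i)ᴴ) ∧ (∑ i, (V i)ᴴ * V i = 1)

/-- Irreducibility of a positive map on `M_n`: the only orthogonal projections `P` with
`T(P M_n P) ⊆ P M_n P` are `P = 0` and `P = I`. -/
def IsIrreducibleMap {n : ℕ} (T : Module.End ℂ (Mn n)) : Prop :=
  ∀ P : Mn n, P.IsHermitian → P * P = P →
    (∀ X : Mn n, ∃ Y : Mn n, T (P * X * P) = P * Y * P) → P = 0 ∨ P = 1

/-!
Write `A = 1 - T` and `P = 1 - B A`. From `A B A = A` we get `A P = 0`, i.e. `T P = P`, and, as `B`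
commutes with `T`, the telescoping identity `∑_{k<N} T^k = N P + B (1 - T^N)`. Positivity and
trace preservation keep the orbit `T^k ρ` among the states, hence bounded, so the Cesàro means of
`T^k ρ` converge to `P ρ`; they are positive semidefinite, and so is their limit. Finally
`P ρ = ρ - A (B ρ)` and `A` kills traces.
-/

section GroupInverse

variable {R : Type*} [Ring R] {T B : R}

theorem mul_one_sub_mul_one_sub_eq_self (h : (1 - T) * B * (1 - T) = 1 - T) :
    T * (1 - B * (1 - T)) = 1 - B * (1 - T) := by
  have hker : (1 - T) * (1 - B * (1 - T)) = 0 := by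
    rw [mul_sub, mul_one, ← mul_assoc, h, sub_self]
  rw [← sub_eq_zero, ← sub_one_mul, ← neg_sub, neg_mul, hker, neg_zero]

theorem pow_mul_one_sub_mul_one_sub_eq_self (h : (1 - T) * B * (1 - T) = 1 - T) (k : ℕ) :
    T ^ k * (1 - B * (1 - T)) = 1 - B * (1 - T) := by
  induction k with
  | zero => rw [pow_zero, one_mul]
  | succ k ih => rw [pow_succ, mul_assoc, mul_one_sub_mul_one_sub_eq_self h, ih]

theorem sum_range_pow_eq_of_groupInverse (h : (1 - T) * B * (1 - T) = 1 - T)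
    (hc : Commute (1 - T) B) (N : ℕ) :
    ∑ k ∈ Finset.range N, T ^ k = (N : R) * (1 - B * (1 - T)) + B * (1 - T ^ N) := by
  have hTB : Commute T B := by simpa using (hc.sub_left (Commute.one_left B)).neg_left
  have hstep (k : ℕ) : T ^ k = (1 - B * (1 - T)) + (B * T ^ k - B * T ^ (k + 1)) := by
    calc T ^ k = T ^ k * (1 - B * (1 - T)) + T ^ k * B * (1 - T) := by
          rw [mul_assoc, ← mul_add, sub_add_cancel, mul_one]
      _ = _ := by
          rw [pow_mul_one_sub_mul_one_sub_eq_self h, (hTB.pow_left k).eq, mul_assoc B,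
            mul_sub (T ^ k), mul_one, ← pow_succ, mul_sub B (T ^ k)]
  rw [Finset.sum_congr rfl fun k _ => hstep k, Finset.sum_add_distrib,
    Finset.sum_range_sub' (fun k => B * T ^ k), Finset.sum_const, Finset.card_range,
    nsmul_eq_mul, pow_zero, mul_one, mul_sub B 1 (T ^ N), mul_one]

end GroupInverse

open Filter Topology in
theorem tendsto_cesaro_of_groupInverse {𝕜 E : Type*} [RCLike 𝕜] [NormedAddCommGroup E]
    [NormedSpace 𝕜 E] [FiniteDimensional 𝕜 E] {T B : Module.End 𝕜 E}
    (h : (1 - T) * B * (1 - T) = 1 - T) (hc : Commute (1 - T) B) {x : E} {C : ℝ}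
    (hbdd : ∀ k, ‖(T ^ k) x‖ ≤ C) :
    Tendsto (fun N : ℕ => ((N : 𝕜) + 1)⁻¹ • ∑ k ∈ Finset.range (N + 1), (T ^ k) x) atTop
      (𝓝 ((1 - B * (1 - T)) x)) := by
  have hN (N : ℕ) : ((N : 𝕜) + 1)⁻¹ • ∑ k ∈ Finset.range (N + 1), (T ^ k) x
      = (1 - B * (1 - T)) x + ((N : 𝕜) + 1)⁻¹ • (B * (1 - T ^ (N + 1))) x := by
    rw [← LinearMap.sum_apply, sum_range_pow_eq_of_groupInverse h hc, LinearMap.add_apply,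
      Module.End.mul_apply, Module.End.natCast_apply, ← Nat.cast_smul_eq_nsmul 𝕜, smul_add,
      smul_smul, Nat.cast_succ, inv_mul_cancel₀ (Nat.cast_add_one_ne_zero N), one_smul]
  have hbddB : IsBoundedUnder (· ≤ ·) atTop (fun N : ℕ => ‖(B * (1 - T ^ (N + 1))) x‖) := by
    set B' := LinearMap.toContinuousLinearMap B
    refine isBoundedUnder_of ⟨‖B'‖ * (‖x‖ + C), fun N => ?_⟩
    calc ‖B (x - (T ^ (N + 1)) x)‖ ≤ ‖B'‖ * ‖x - (T ^ (N + 1)) x‖ := B'.le_opNorm _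
      _ ≤ ‖B'‖ * (‖x‖ + C) := by
          gcongr; exact (norm_sub_le _ _).trans (add_le_add_right (hbdd _) _)
  have hinv : Tendsto (fun N : ℕ => ((N : 𝕜) + 1)⁻¹) atTop (𝓝 0) := by
    simpa using tendsto_one_div_add_atTop_nhds_zero_nat (𝕜 := 𝕜)
  simpa only [hN, add_zero] using tendsto_const_nhds.add (hinv.zero_smul_isBoundedUnder_le hbddB)

theorem Matrix.PosSemidef.norm_apply_sq_le {𝕜 n : Type*} [RCLike 𝕜] [Fintype n]
    {X : Matrix n n 𝕜} (hX : X.PosSemidef) (i j : n) :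
    ‖X i j‖ ^ 2 ≤ RCLike.re (X i i) * RCLike.re (X j j) := by
  classical
  have hdet := (hX.submatrix ![i, j]).det_nonneg
  rw [det_fin_two] at hdet
  simp only [submatrix_apply, Matrix.cons_val_zero, Matrix.cons_val_one] at hdet
  rw [← hX.isHermitian.apply i j, RCLike.star_def, RCLike.conj_mul] at hdet
  have him (k : n) : RCLike.im (X k k) = 0 := (RCLike.nonneg_iff.mp hX.diag_nonneg).2
  have := (RCLike.nonneg_iff.mp hdet).1
  rw [map_sub, RCLike.mul_re, him, him, mul_zero, sub_zero, ← RCLike.ofReal_pow,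
    RCLike.ofReal_re] at this
  rw [← norm_star, hX.isHermitian.apply]
  linarith

theorem Matrix.PosSemidef.re_apply_le_re_trace {𝕜 n : Type*} [RCLike 𝕜] [Fintype n]
    {X : Matrix n n 𝕜} (hX : X.PosSemidef) (i : n) :
    RCLike.re (X i i) ≤ RCLike.re X.trace := by
  rw [Matrix.trace, map_sum]
  exact Finset.single_le_sum (f := fun k => RCLike.re (X k k))
    (fun k _ => (RCLike.nonneg_iff.mp hX.diag_nonneg).1) (Finset.mem_univ i)

theorem Matrix.PosSemidef.norm_apply_le_re_trace {𝕜 n : Type*} [RCLike 𝕜] [Fintype n]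
    {X : Matrix n n 𝕜} (hX : X.PosSemidef) (i j : n) :
    ‖X i j‖ ≤ RCLike.re X.trace := by
  have hdiag (k : n) : 0 ≤ RCLike.re (X k k) := (RCLike.nonneg_iff.mp hX.diag_nonneg).1
  rw [← sq_le_sq₀ (norm_nonneg _) ((hdiag i).trans (hX.re_apply_le_re_trace i)), sq (RCLike.re _)]
  exact (hX.norm_apply_sq_le i j).trans <| mul_le_mul (hX.re_apply_le_re_trace i)
    (hX.re_apply_le_re_trace j) (hdiag j) ((hdiag i).trans (hX.re_apply_le_re_trace i))

theorem Matrix.isClosed_setOf_posSemidef {𝕜 n : Type*} [RCLike 𝕜] [Fintype n] :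
    IsClosed {X : Matrix n n 𝕜 | X.PosSemidef} := by
  simp only [posSemidef_iff_dotProduct_mulVec, Set.ofPred_and, Set.ofPred_forall]
  refine IsClosed.inter ?_ (isClosed_iInter fun v => isClosed_le continuous_const ?_)
  · exact isClosed_eq continuous_id.matrix_conjTranspose continuous_id
  · exact continuous_const.dotProduct (continuous_id.matrix_mulVec continuous_const)

theorem IsPosMap.pow {n : ℕ} {T : Module.End ℂ (Mn n)} (hT : IsPosMap T) (k : ℕ) :
    IsPosMap (T ^ k) := by
  induction k with
  | zero => exact fun X hX => by rwa [pow_zero, Module.End.one_apply]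
  | succ k ih => exact fun X hX => by rw [pow_succ', Module.End.mul_apply]; exact hT _ (ih X hX)

theorem IsTracePreserving.pow {n : ℕ} {T : Module.End ℂ (Mn n)} (hT : IsTracePreserving T)
    (k : ℕ) : IsTracePreserving (T ^ k) := by
  induction k with
  | zero => simp [IsTracePreserving]
  | succ k ih => exact fun X => by rw [pow_succ', Module.End.mul_apply, hT, ih]

theorem IsTracePreserving.trace_one_sub_apply {n : ℕ} {T : Module.End ℂ (Mn n)}
    (hT : IsTracePreserving T) (X : Mn n) : ((1 - T) X).trace = 0 := by
  rw [LinearMap.sub_apply, Module.End.one_apply, trace_sub, hT, sub_self]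

section

attribute [local instance] Matrix.normedAddCommGroup Matrix.normedSpace

theorem norm_le_one_of_posSemidef_of_trace_eq_one {n : ℕ} {X : Mn n} (hX : X.PosSemidef)
    (htr : X.trace = 1) : ‖X‖ ≤ 1 :=
  (Matrix.norm_le_iff zero_le_one).mpr fun i j => by
    simpa [htr] using hX.norm_apply_le_re_trace i j

open Filter in
theorem IsPosMap.posSemidef_one_sub_mul_apply {n : ℕ} {T B : Module.End ℂ (Mn n)}
    (hTpos : IsPosMap T) (hTtr : IsTracePreserving T) (h : (1 - T) * B * (1 - T) = 1 - T)
    (hc : Commute (1 - T) B) {ρ : Mn n} (hρpsd : ρ.PosSemidef) (hρtr : ρ.trace = 1) :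
    ((1 - B * (1 - T)) ρ).PosSemidef := by
  have horbit (k : ℕ) : ((T ^ k) ρ).PosSemidef := hTpos.pow k ρ hρpsd
  have hbdd (k : ℕ) : ‖(T ^ k) ρ‖ ≤ 1 :=
    norm_le_one_of_posSemidef_of_trace_eq_one (horbit k) ((hTtr.pow k ρ).trans hρtr)
  refine Matrix.isClosed_setOf_posSemidef.mem_of_tendsto
    (tendsto_cesaro_of_groupInverse h hc hbdd) (Eventually.of_forall fun N => ?_)
  exact (posSemidef_sum _ fun k _ => horbit k).smul
    (RCLike.inv_pos.mpr (Nat.cast_add_one_pos N)).le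

end

theorem stmt9_general {n : ℕ} (T : Module.End ℂ (Mn n))
    (hTpos : IsPosMap T) (hTtr : IsTracePreserving T)
    (A B : Module.End ℂ (Mn n)) (hA : A = 1 - T)
    (hB1 : A * B * A = A) (hB3 : A * B = B * A)
    (ρ : Mn n) (hρpsd : ρ.PosSemidef) (hρtr : ρ.trace = 1) :
    (((1 : Module.End ℂ (Mn n)) - B * A) ρ).PosSemidef ∧
    (((1 : Module.End ℂ (Mn n)) - B * A) ρ).trace = 1 ∧
    T (((1 : Module.End ℂ (Mn n)) - B * A) ρ) = ((1 : Module.End ℂ (Mn n)) - B * A) ρ := by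
  subst hA
  refine ⟨hTpos.posSemidef_one_sub_mul_apply hTtr hB1 hB3 hρpsd hρtr, ?_,
    LinearMap.congr_fun (mul_one_sub_mul_one_sub_eq_self hB1) ρ⟩
  rw [LinearMap.sub_apply, Module.End.one_apply, ← hB3, Module.End.mul_apply, trace_sub,
    hTtr.trace_one_sub_apply, hρtr, sub_zero]

/-- For a positive trace-preserving `T`, `A = I − T` and `A^#` its group
inverse, `(I − A^#A)(ρ)` is an invariant state of `T` for every state `ρ`. -/
theorem stmt9 {n : ℕ} (T : Module.End ℂ (Mn n))
    (hTpos : IsPosMap T) (hTtr : IsTracePreserving T)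
    (A B : Module.End ℂ (Mn n)) (hA : A = 1 - T)
    (hB1 : A * B * A = A) (hB2 : B * A * B = B) (hB3 : A * B = B * A)
    (ρ : Mn n) (hρpsd : ρ.PosSemidef) (hρtr : ρ.trace = 1) :
    (((1 : Module.End ℂ (Mn n)) - B * A) ρ).PosSemidef ∧
    (((1 : Module.End ℂ (Mn n)) - B * A) ρ).trace = 1 ∧
    T (((1 : Module.End ℂ (Mn n)) - B * A) ρ) = ((1 : Module.End ℂ (Mn n)) - B * A) ρ :=
  stmt9_general T hTpos hTtr A B hA hB1 hB3 ρ hρpsd hρtr
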